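/- Let d ≥ 1, T > 0, and let p, q > 2 satisfy d/p + 2/q < 1. Let f_n, f : [0,T] × ℝ^d → ℝ^d be Borel measurable functions with finite mixed norms such that ‖f_n − f‖_{L^q_p} → 0 as n → ∞. Then ∫_0^T (2πs)^{−d/2} ∫_{ℝ^d} |f_n(s,z) − f(s,z)|^2 e^{−|z|^2/(2s)} dz ds → 0 as n → ∞. -/

import Mathlib

open MeasureTheory ProbabilityTheory Filter
open scoped ENNReal NNReal Topology

noncomputable section

/-- `Euc d` is `ℝ^d` with the Euclidean norm. -/
abbrev Euc (d : ℕ) := EuclideanSpace ℝ (Fin d)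

/-- `B` is a `d`-dimensional Brownian motion on `[0,T]` with respect to `μ`:
continuous paths, `B 0 = 0`, and for any monotone family of times in `[0,T]` the
coordinates of the increments are independent, each increment coordinate being
a centered Gaussian of variance `t - s`. -/
def IsBrownianMotion {Ω : Type*} [MeasurableSpace Ω] (μ : Measure Ω) (d : ℕ) (T : ℝ)
    (B : ℝ → Ω → Euc d) : Prop :=
  (∀ ω, ContinuousOn (fun t => B t ω) (Set.Icc 0 T)) ∧
  (∀ ω, B 0 ω = 0) ∧
  (∀ t, Measurable (B t)) ∧
  (∀ (n : ℕ) (t : Fin (n + 1) → ℝ), Monotone t → (∀ i, t i ∈ Set.Icc (0 : ℝ) T) →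
    iIndepFun
      (fun p : Fin n × Fin d => fun ω =>
        (B (t p.1.succ) ω - B (t p.1.castSucc) ω) p.2) μ) ∧
  (∀ s t : ℝ, 0 ≤ s → s ≤ t → t ≤ T → ∀ i : Fin d,
    μ.map (fun ω => (B t ω - B s ω) i) = gaussianReal 0 (Real.toNNReal (t - s)))

/-- The mixed norm `‖f‖_{L^q_p}` (as an extended nonnegative real). -/
def mixedNorm (d : ℕ) (T p q : ℝ) (f : ℝ → Euc d → Euc d) : ℝ≥0∞ :=
  (∫⁻ t in Set.Ioc (0 : ℝ) T,
      (∫⁻ x : Euc d, ENNReal.ofReal (‖f t x‖ ^ p)) ^ (q / p)) ^ (1 / q)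

/-- The `μ`-augmented natural filtration of `B` at time `t`. -/
def augFiltration {Ω : Type*} [MeasurableSpace Ω] (μ : Measure Ω) {d : ℕ}
    (B : ℝ → Ω → Euc d) (t : ℝ) : MeasurableSpace Ω :=
  (⨆ s ∈ Set.Icc (0 : ℝ) t, MeasurableSpace.comap (B s) inferInstance) ⊔
    MeasurableSpace.generateFrom {N : Set Ω | μ N = 0}

/-- `X` is a strong solution of `dX_t = b(t, X_t) dt + dB_t`, `X_0 = x`, on `[0,T]`:
a continuous process, adapted to the `μ`-augmented natural filtration of `B`, such that
a.s. `∫_0^T |b(s,X_s)| ds < ∞` and `X_t = x + ∫_0^t b(s,X_s) ds + B_t` for all `t ∈ [0,T]`. -/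
def IsStrongSolution {Ω : Type*} [MeasurableSpace Ω] (μ : Measure Ω) {d : ℕ} (T : ℝ)
    (B : ℝ → Ω → Euc d) (b : ℝ → Euc d → Euc d) (x : Euc d) (X : ℝ → Ω → Euc d) : Prop :=
  (∀ ω, ContinuousOn (fun t => X t ω) (Set.Icc 0 T)) ∧
  (∀ t ∈ Set.Icc (0 : ℝ) T, Measurable[augFiltration μ B t] (X t)) ∧
  (∀ᵐ ω ∂μ, IntegrableOn (fun s => b s (X s ω)) (Set.Icc 0 T) ∧
    ∀ t ∈ Set.Icc (0 : ℝ) T,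
      X t ω = x + (∫ s in Set.Icc (0 : ℝ) t, b s (X s ω)) + B t ω)

/-! For each time `s`, Hölder's inequality with exponents `p/2` and `p/(p-2)` bounds the
integral of `|g(s,·)|²` against the heat kernel `ρ_s` by `‖g(s,·)‖²_{L^p} ‖ρ_s‖_{L^{p/(p-2)}}`,
and Gaussian scaling gives `‖ρ_s‖_{L^{p/(p-2)}} = c s^{-d/p}`. Hölder in time with exponents
`q/2` and `q/(q-2)` then bounds the whole quantity by `C ‖g‖²_{L^q_p}`, where `C` is finite
because `s ↦ s^{-dq/(p(q-2))}` is integrable at `0` exactly when `d/p + 2/q < 1`. -/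

open Real Module

theorem lintegral_sq_mul_le {α : Type*} [MeasurableSpace α] {μ : Measure α} {p : ℝ}
    (hp : 2 < p) {F W : α → ℝ≥0∞} (hF : AEMeasurable F μ) (hW : AEMeasurable W μ) :
    ∫⁻ x, F x ^ 2 * W x ∂μ ≤
      (∫⁻ x, F x ^ p ∂μ) ^ (2 / p) * (∫⁻ x, W x ^ (p / (p - 2)) ∂μ) ^ ((p - 2) / p) := by
  have hconj : (p / 2).HolderConjugate (p / (p - 2)) := by
    rw [Real.holderConjugate_iff]
    refine ⟨by linarith, ?_⟩
    field_simp
    ring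
  have hF2 : ∀ x, (F x ^ 2) ^ (p / 2) = F x ^ p := fun x => by
    rw [← ENNReal.rpow_natCast, ← ENNReal.rpow_mul]
    congr 1
    push_cast
    ring
  have := ENNReal.lintegral_mul_le_Lp_mul_Lq μ hconj (hF.pow_const 2) hW
  simpa only [Pi.mul_apply, hF2, one_div_div] using this

theorem lintegral_Ioc_ofReal_rpow_rpow_lt_top {a r : ℝ} (hr : 0 ≤ r) (ha : -1 < a * r) (T : ℝ) :
    ∫⁻ s in Set.Ioc 0 T, ENNReal.ofReal (s ^ a) ^ r < ⊤ := by
  rw [setLIntegral_congr_fun measurableSet_Ioc fun s hs => by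
    rw [ENNReal.ofReal_rpow_of_nonneg (rpow_nonneg hs.1.le _) hr, ← rpow_mul hs.1.le]]
  exact (intervalIntegral.intervalIntegrable_rpow' ha).1.lintegral_lt_top

section Gaussian

variable {V : Type*} [NormedAddCommGroup V] [InnerProductSpace ℝ V] [FiniteDimensional ℝ V]
  [MeasurableSpace V] [BorelSpace V]

theorem lintegral_exp_neg_mul_sq_norm {b : ℝ} (hb : 0 < b) :
    ∫⁻ v : V, ENNReal.ofReal (rexp (-b * ‖v‖ ^ 2)) =
      ENNReal.ofReal ((π / b) ^ (finrank ℝ V / 2 : ℝ)) := by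
  have hval := GaussianFourier.integral_rexp_neg_mul_sq_norm (V := V) hb
  have hint : Integrable (fun v : V => rexp (-b * ‖v‖ ^ 2)) :=
    .of_integral_ne_zero (hval ▸ by positivity)
  rw [← ofReal_integral_eq_lintegral_ofReal hint (ae_of_all _ fun _ => (exp_pos _).le), hval]

variable (V) in
def heatKernel (s : ℝ) (v : V) : ℝ :=
  (2 * π * s) ^ (-(finrank ℝ V : ℝ) / 2) * rexp (-‖v‖ ^ 2 / (2 * s))

theorem lintegral_heatKernel_rpow {s r : ℝ} (hs : 0 < s) (hr : 0 < r) :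
    ∫⁻ v, ENNReal.ofReal (heatKernel V s v) ^ r =
      ENNReal.ofReal
        ((2 * π * s) ^ ((1 - r) * finrank ℝ V / 2) * r ^ (-(finrank ℝ V : ℝ) / 2)) := by
  have hu : 0 < 2 * π * s := by positivity
  have hpt : ∀ v : V, ENNReal.ofReal (heatKernel V s v) ^ r =
      ENNReal.ofReal ((2 * π * s) ^ (-(finrank ℝ V : ℝ) / 2 * r)) *
        ENNReal.ofReal (rexp (-(r / (2 * s)) * ‖v‖ ^ 2)) := fun v => by
    rw [heatKernel, ENNReal.ofReal_rpow_of_nonneg (by positivity) hr.le,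
      mul_rpow (by positivity) (exp_pos _).le, ← rpow_mul hu.le, ← exp_mul,
      ENNReal.ofReal_mul (by positivity)]
    congr 3
    ring
  rw [lintegral_congr hpt, lintegral_const_mul' _ _ ENNReal.ofReal_ne_top,
    lintegral_exp_neg_mul_sq_norm (by positivity), ← ENNReal.ofReal_mul (by positivity)]
  congr 1
  rw [show π / (r / (2 * s)) = 2 * π * s / r by field_simp, div_rpow hu.le hr.le,
    mul_div_assoc', ← rpow_add hu, div_eq_mul_inv, ← rpow_neg hr.le]
  congr 2 <;> ring

theorem exists_rpow_lintegral_heatKernel_rpow_eq {p : ℝ} (hp : 2 < p) :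
    ∃ c : ℝ≥0∞, c ≠ ⊤ ∧ ∀ s, 0 < s →
      (∫⁻ v, ENNReal.ofReal (heatKernel V s v) ^ (p / (p - 2))) ^ ((p - 2) / p) =
        c * ENNReal.ofReal (s ^ (-(finrank ℝ V : ℝ) / p)) := by
  set r := p / (p - 2)
  have hr : 0 < r := div_pos (by linarith) (by linarith)
  have he : 0 ≤ (p - 2) / p := div_nonneg (by linarith) (by linarith)
  have hexp : (1 - r) * finrank ℝ V / 2 * ((p - 2) / p) = -(finrank ℝ V : ℝ) / p := by
    have : p - 2 ≠ 0 := by linarith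
    simp only [r]
    field_simp
    ring
  refine ⟨ENNReal.ofReal ((2 * π) ^ ((1 - r) * finrank ℝ V / 2) *
      r ^ (-(finrank ℝ V : ℝ) / 2)) ^ ((p - 2) / p),
    ENNReal.rpow_ne_top_of_nonneg he ENNReal.ofReal_ne_top, fun s hs => ?_⟩
  rw [lintegral_heatKernel_rpow hs hr, mul_rpow (by positivity) hs.le, mul_right_comm,
    ENNReal.ofReal_mul (by positivity), ENNReal.mul_rpow_of_nonneg _ _ he,
    ENNReal.ofReal_rpow_of_nonneg (by positivity) he (x := s ^ _), ← rpow_mul hs.le, hexp]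

end Gaussian

theorem ofReal_heat_integrand_eq {d : ℕ} {E : Type*} [NormedAddCommGroup E] (s : ℝ) (y : E)
    (z : Euc d) :
    ENNReal.ofReal ((2 * π * s) ^ (-(d : ℝ) / 2) * ‖y‖ ^ 2 * rexp (-‖z‖ ^ 2 / (2 * s))) =
      ENNReal.ofReal ‖y‖ ^ 2 * ENNReal.ofReal (heatKernel (Euc d) s z) := by
  rw [heatKernel, finrank_euclideanSpace_fin, ← ENNReal.ofReal_pow (norm_nonneg _),
    ← ENNReal.ofReal_mul (by positivity)]
  ring_nf

theorem exists_lintegral_heat_le_lintegral_rpow {d : ℕ} {E : Type*} [NormedAddCommGroup E]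
    [MeasurableSpace E] [OpensMeasurableSpace E] {p : ℝ} (hp : 2 < p) :
    ∃ c : ℝ≥0∞, c ≠ ⊤ ∧ ∀ s, 0 < s → ∀ g : Euc d → E, Measurable g →
      ∫⁻ z, ENNReal.ofReal
          ((2 * π * s) ^ (-(d : ℝ) / 2) * ‖g z‖ ^ 2 * rexp (-‖z‖ ^ 2 / (2 * s))) ≤
        c * ((∫⁻ z, ENNReal.ofReal (‖g z‖ ^ p)) ^ (2 / p) *
          ENNReal.ofReal (s ^ (-(d : ℝ) / p))) := by
  obtain ⟨c, hc, hscale⟩ := exists_rpow_lintegral_heatKernel_rpow_eq (V := Euc d) hp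
  simp only [finrank_euclideanSpace_fin] at hscale
  refine ⟨c, hc, fun s hs g hg => ?_⟩
  have hρ : Measurable fun z => ENNReal.ofReal (heatKernel (Euc d) s z) := by
    unfold heatKernel; fun_prop
  have hpow : ∀ z, ENNReal.ofReal ‖g z‖ ^ p = ENNReal.ofReal (‖g z‖ ^ p) := fun z =>
    ENNReal.ofReal_rpow_of_nonneg (norm_nonneg _) (by linarith)
  calc _ = ∫⁻ z, ENNReal.ofReal ‖g z‖ ^ 2 * ENNReal.ofReal (heatKernel (Euc d) s z) :=
        lintegral_congr fun z => ofReal_heat_integrand_eq s _ z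
    _ ≤ _ := lintegral_sq_mul_le hp hg.norm.ennreal_ofReal.aemeasurable hρ.aemeasurable
    _ = _ := by
      rw [hscale s hs]
      simp only [hpow]
      ring

theorem exists_lintegral_heat_le_mixedNorm_sq {d : ℕ} {T p q : ℝ} (hp : 2 < p) (hq : 2 < q)
    (hpq : (d : ℝ) / p + 2 / q < 1) :
    ∃ C : ℝ≥0∞, C ≠ ⊤ ∧ ∀ g : ℝ → Euc d → Euc d, Measurable (Function.uncurry g) →
      ∫⁻ s in Set.Ioc 0 T, ∫⁻ z, ENNReal.ofReal
          ((2 * π * s) ^ (-(d : ℝ) / 2) * ‖g s z‖ ^ 2 * rexp (-‖z‖ ^ 2 / (2 * s))) ≤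
        C * mixedNorm d T p q g ^ 2 := by
  obtain ⟨c, hc, hspace⟩ := exists_lintegral_heat_le_lintegral_rpow (d := d) (E := Euc d) hp
  set a := -(d : ℝ) / p
  have hq' : 0 < q / (q - 2) := div_pos (by linarith) (by linarith)
  have ha : -1 < a * (q / (q - 2)) := by
    have h1 : (d : ℝ) / p < (q - 2) / q := by rw [sub_div, div_self (by linarith)]; linarith
    have h2 : (q - 2) / q * (q / (q - 2)) = 1 := by
      have : q - 2 ≠ 0 := by linarith
      field_simp
    have := mul_lt_mul_of_pos_right h1 hq'
    simp only [a, neg_div, neg_mul]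
    linarith
  set D := (∫⁻ s in Set.Ioc 0 T, ENNReal.ofReal (s ^ a) ^ (q / (q - 2))) ^ ((q - 2) / q)
  have hD : D ≠ ⊤ := ENNReal.rpow_ne_top_of_nonneg (div_nonneg (by linarith) (by linarith))
    (lintegral_Ioc_ofReal_rpow_rpow_lt_top hq'.le ha T).ne
  refine ⟨c * D, ENNReal.mul_ne_top hc hD, fun g hg => ?_⟩
  set N : ℝ → ℝ≥0∞ := fun s => (∫⁻ z, ENNReal.ofReal (‖g s z‖ ^ p)) ^ (1 / p)
  have hN : ∀ s r, N s ^ r = (∫⁻ z, ENNReal.ofReal (‖g s z‖ ^ p)) ^ (r / p) := fun s r => by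
    rw [← ENNReal.rpow_mul, one_div_mul_eq_div]
  have hNm : Measurable N := (Measurable.lintegral_prod_right'
    (f := fun x : ℝ × Euc d => ENNReal.ofReal (‖g x.1 x.2‖ ^ p))
    (hg.norm.pow_const p).ennreal_ofReal).pow_const _
  have htime : ∫⁻ s in Set.Ioc 0 T, N s ^ 2 * ENNReal.ofReal (s ^ a) ≤
      mixedNorm d T p q g ^ 2 * D := by
    calc _ ≤ (∫⁻ s in Set.Ioc 0 T, N s ^ q) ^ (2 / q) * D :=
          lintegral_sq_mul_le hq hNm.aemeasurable (by fun_prop)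
      _ = mixedNorm d T p q g ^ 2 * D := by
        simp only [hN, mixedNorm, ← ENNReal.rpow_natCast, ← ENNReal.rpow_mul]
        congr 2
        ring
  calc _ ≤ ∫⁻ s in Set.Ioc 0 T, c * (N s ^ 2 * ENNReal.ofReal (s ^ a)) :=
        setLIntegral_mono' measurableSet_Ioc fun s hs => by
          simpa only [← ENNReal.rpow_natCast, hN, Nat.cast_ofNat] using
            hspace s hs.1 (g s) hg.of_uncurry_left
    _ = c * ∫⁻ s in Set.Ioc 0 T, N s ^ 2 * ENNReal.ofReal (s ^ a) :=
        lintegral_const_mul' _ _ hc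
    _ ≤ c * (mixedNorm d T p q g ^ 2 * D) := by gcongr
    _ = c * D * mixedNorm d T p q g ^ 2 := by ring

theorem heat_kernel_L2_convergence_general
    (d : ℕ) (T : ℝ)
    (p q : ℝ) (hp : 2 < p) (hq : 2 < q) (hpq : (d : ℝ) / p + 2 / q < 1)
    (fn : ℕ → ℝ → Euc d → Euc d) (f : ℝ → Euc d → Euc d)
    (hfn : ∀ n, Measurable (Function.uncurry (fn n)))
    (hf : Measurable (Function.uncurry f))
    (hconv : Filter.Tendsto
      (fun n => mixedNorm d T p q (fun t x => fn n t x - f t x)) Filter.atTop (nhds 0)) :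
    Filter.Tendsto
      (fun n => ∫⁻ s in Set.Ioc (0 : ℝ) T, ∫⁻ z : Euc d,
        ENNReal.ofReal
          ((2 * Real.pi * s) ^ (-(d : ℝ) / 2) * ‖fn n s z - f s z‖ ^ 2 *
            Real.exp (-‖z‖ ^ 2 / (2 * s))))
      Filter.atTop (nhds 0) := by
  obtain ⟨C, hC, hbound⟩ := exists_lintegral_heat_le_mixedNorm_sq (T := T) hp hq hpq
  have hlim : Tendsto (fun n => C * mixedNorm d T p q (fun t x => fn n t x - f t x) ^ 2)
      atTop (𝓝 0) := by
    simpa using ENNReal.Tendsto.const_mul (ENNReal.Tendsto.pow (n := 2) hconv) (Or.inr hC)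
  exact tendsto_of_tendsto_of_tendsto_of_le_of_le tendsto_const_nhds hlim (fun _ => zero_le)
    fun n => hbound _ ((hfn n).sub hf)

/-- if `f_n → f` in the mixed norm `L^q_p` with `d/p + 2/q < 1`,
then the time-integrated heat-kernel integral of `|f_n - f|^2` tends to `0`. -/
theorem heat_kernel_L2_convergence
    (d : ℕ) (hd : 1 ≤ d) (T : ℝ) (hT : 0 < T)
    (p q : ℝ) (hp : 2 < p) (hq : 2 < q) (hpq : (d : ℝ) / p + 2 / q < 1)
    (fn : ℕ → ℝ → Euc d → Euc d) (f : ℝ → Euc d → Euc d)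
    (hfn : ∀ n, Measurable (Function.uncurry (fn n)))
    (hf : Measurable (Function.uncurry f))
    (hfnnorm : ∀ n, mixedNorm d T p q (fn n) < ⊤)
    (hfnorm : mixedNorm d T p q f < ⊤)
    (hconv : Filter.Tendsto
      (fun n => mixedNorm d T p q (fun t x => fn n t x - f t x)) Filter.atTop (nhds 0)) :
    Filter.Tendsto
      (fun n => ∫⁻ s in Set.Ioc (0 : ℝ) T, ∫⁻ z : Euc d,
        ENNReal.ofReal
          ((2 * Real.pi * s) ^ (-(d : ℝ) / 2) * ‖fn n s z - f s z‖ ^ 2 *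
            Real.exp (-‖z‖ ^ 2 / (2 * s))))
      Filter.atTop (nhds 0) :=
  heat_kernel_L2_convergence_general d T p q hp hq hpq fn f hfn hf hconv
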